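/- Let d ≥ 1, let V = {1,…,n}, and let F be a family of (d+1)-element subsets of V. Fix a vertex i ∈ V, let link_F(i) = { σ \ {i} : σ ∈ F, i ∈ σ }, suppose |link_F(i)| ≥ d+1, and let W = {v_1 < v_2 < … < v_m} be the set of vertices belonging to some member of link_F(i), with m ≥ d+1. Let Λ_d(W) = {{v_1,…,v_{d+1}}} ∪ { {v_1} ∪ S ∪ {v_j} : S a (d−1)-element subset of {v_2,…,v_{d+1}}, d+2 ≤ j ≤ m } (the copy of the LGRC on W). Assume that every d-element subset of every member of Λ_d(W) belongs to link_F(i). If the family { σ ∈ F : i ∉ σ } ∪ Λ_d(W) is generically globally d-volume rigid on the vertex set V \ {i}, then F is generically globally d-volume rigid on V. -/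

import Mathlib

/-!
Let `p`, `q` be generic configurations whose volumes agree on `F`. For `σ ∈ Λ_d(W)` every cone
from `i` over a facet of `σ` lies in `F`, so the cocycle relation among the facets of the
`(d+1)`-simplex `σ ∪ {i}` transfers the agreement to `σ`. Rigidity of
`{σ ∈ F : i ∉ σ} ∪ Λ_d(W)` then gives agreement on every simplex avoiding `i`. Finally, write
`(1, p i)` in the basis of homogeneous coordinates of a simplex `σ₀ ∈ Λ_d(W)`, nondegenerate by
genericity: by Cramer's rule the coefficients are ratios of volumes of cones from `i` over facets
of `σ₀`, which lie in `F`, so `p` and `q` give the same coefficients, and multilinearity of the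
determinant reduces every simplex through `i` to simplices avoiding `i`.
-/

/-- The signed `d`-volume of the `(d+1)`-element simplex `σ ⊆ ℕ` at the configuration
`p : ℕ → Fin d → ℝ`.  Junk value `0` if `σ` does not have `d+1` elements. -/
noncomputable def vol (d : ℕ) (σ : Finset ℕ) (p : ℕ → Fin d → ℝ) : ℝ :=
  if h : σ.card = d + 1 then
    Matrix.det
      ((Matrix.of (Fin.cons (fun _ => (1 : ℝ)) fun i j => p (σ.orderEmbOfFin h j) i) :
        Matrix (Fin (d + 1)) (Fin (d + 1)) ℝ))
  else 0

/-- A configuration of the finite vertex set `V` in `ℝ^d` is generic if every nonzero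
polynomial with rational coefficients in the `d·|V|` coordinate variables is nonzero at the
coordinates of the configuration. -/
def IsGeneric (d : ℕ) (V : Finset ℕ) (p : ℕ → Fin d → ℝ) : Prop :=
  ∀ f : MvPolynomial (↥V × Fin d) ℚ, f ≠ 0 →
    (MvPolynomial.aeval fun v : ↥V × Fin d => p v.1.1 v.2) f ≠ 0

/-- A family `F` of `(d+1)`-element subsets of the finite vertex set `V` is generically
globally `d`-volume rigid if for all generic configurations `p, q` of `V` whose signed
volumes agree on every member of `F`, the signed volumes agree on every `(d+1)`-element
subset of `V`. -/
def GenGlobRigid (d : ℕ) (V : Finset ℕ) (F : Finset (Finset ℕ)) : Prop :=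
  ∀ p q : ℕ → Fin d → ℝ, IsGeneric d V p → IsGeneric d V q →
    (∀ σ ∈ F, vol d σ p = vol d σ q) →
    ∀ τ ⊆ V, τ.card = d + 1 → vol d τ p = vol d τ q

/-- The link of the vertex `i` in the family `F` of `d`-simplices:
`{ σ \ {i} : σ ∈ F, i ∈ σ }`. -/
def link (i : ℕ) (F : Finset (Finset ℕ)) : Finset (Finset ℕ) :=
  (F.filter fun σ => i ∈ σ).image fun σ => σ.erase i

/-- The set `Λ_d` of `d`-simplices of the lexicographically greedy rigid complex (LGRC)
on vertex set `{1, …, n}`. -/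
def LGRC (d n : ℕ) : Finset (Finset ℕ) :=
  insert (Finset.Icc 1 (d + 1))
    (((Finset.Icc (d + 2) n) ×ˢ ((Finset.Icc 2 (d + 1)).powersetCard (d - 1))).image
      fun x => insert 1 (insert x.1 x.2))

/-- The copy of the LGRC on the finite vertex set `W = {v_1 < v_2 < … < v_m}`, obtained by
relabelling the LGRC on `{1, …, m}` via `t ↦ v_t` (the `t`-th smallest element of `W`). -/
def LGRCOn (d : ℕ) (W : Finset ℕ) : Finset (Finset ℕ) :=
  (LGRC d W.card).image fun σ => σ.image fun t => (W.sort (· ≤ ·)).getD (t - 1) 0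

open Finset

section TupleVolume

variable {d : ℕ}

def homog (p : ℕ → Fin d → ℝ) (v : ℕ) : Fin (d + 1) → ℝ := Fin.cons 1 (p v)

noncomputable def tupleVol (d : ℕ) (f : Fin (d + 1) → ℕ) (p : ℕ → Fin d → ℝ) : ℝ :=
  Matrix.det (Matrix.of fun j => homog p (f j))

lemma vol_eq_tupleVol {σ : Finset ℕ} (h : σ.card = d + 1) (p : ℕ → Fin d → ℝ) :
    vol d σ p = tupleVol d (σ.orderEmbOfFin h) p := by
  rw [vol, dif_pos h, tupleVol, ← Matrix.det_transpose]
  congr 1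
  ext r c
  refine Fin.cases ?_ (fun k => ?_) c <;> simp [homog]

lemma tupleVol_of_not_injective {f : Fin (d + 1) → ℕ} (hf : ¬ Function.Injective f)
    (p : ℕ → Fin d → ℝ) : tupleVol d f p = 0 := by
  obtain ⟨a, b, hab, hne⟩ := Function.not_injective_iff.mp hf
  exact Matrix.det_zero_of_row_eq hne (show homog p (f a) = homog p (f b) by rw [hab])

lemma tupleVol_comp_perm (f : Fin (d + 1) → ℕ) (π : Equiv.Perm (Fin (d + 1)))
    (p : ℕ → Fin d → ℝ) :
    tupleVol d (f ∘ π) p = Equiv.Perm.sign π * tupleVol d f p :=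
  Matrix.det_permute π (Matrix.of fun j => homog p (f j))

lemma tupleVol_eq_sign_mul_vol {f : Fin (d + 1) → ℕ} (hf : Function.Injective f)
    (p : ℕ → Fin d → ℝ) :
    tupleVol d f p = Equiv.Perm.sign (Tuple.sort f) * vol d (univ.image f) p := by
  have hcard : (univ.image f).card = d + 1 := by
    rw [card_image_of_injective _ hf, card_univ, Fintype.card_fin]
  have hsorted : f ∘ Tuple.sort f = (univ.image f).orderEmbOfFin hcard :=
    orderEmbOfFin_unique hcard (fun j => mem_image_of_mem f (mem_univ _))
      ((Tuple.monotone_sort f).strictMono_of_injective (hf.comp (Equiv.injective _)))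
  rw [vol_eq_tupleVol hcard, ← hsorted, tupleVol_comp_perm, ← mul_assoc, ← Int.cast_mul,
    ← Units.val_mul, Int.units_mul_self, Units.val_one, Int.cast_one, one_mul]

lemma tupleVol_eq_of_vol_image_eq {f : Fin (d + 1) → ℕ} {p q : ℕ → Fin d → ℝ}
    (h : Function.Injective f → vol d (univ.image f) p = vol d (univ.image f) q) :
    tupleVol d f p = tupleVol d f q := by
  by_cases hf : Function.Injective f
  · rw [tupleVol_eq_sign_mul_vol hf, tupleVol_eq_sign_mul_vol hf, h hf]
  · rw [tupleVol_of_not_injective hf, tupleVol_of_not_injective hf]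

lemma sum_neg_one_pow_mul_tupleVol_succAbove (g : Fin (d + 2) → ℕ) (p : ℕ → Fin d → ℝ) :
    ∑ j : Fin (d + 2), (-1 : ℝ) ^ (j : ℕ) * tupleVol d (g ∘ j.succAbove) p = 0 := by
  -- expand along the first column a matrix whose first two columns are both constant `1`
  let B : Matrix (Fin (d + 2)) (Fin (d + 2)) ℝ := Matrix.of fun j => Fin.cons 1 (homog p (g j))
  have hB : B.det = 0 := Matrix.det_zero_of_column_eq (i := 0) (j := 1) (by simp)
    (fun k => by simp [B, homog])
  rw [Matrix.det_succ_column_zero] at hB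
  rw [← hB]
  refine sum_congr rfl fun j _ => ?_
  simp only [B, Matrix.of_apply, Fin.cons_zero, mul_one, tupleVol]
  rfl

lemma tupleVol_eq_detRowAlternating (f : Fin (d + 1) → ℕ) (p : ℕ → Fin d → ℝ) :
    tupleVol d f p = Matrix.detRowAlternating (homog p ∘ f) :=
  rfl

lemma tupleVol_update_eq_sum {p : ℕ → Fin d → ℝ} {w : ℕ} {v : Fin (d + 1) → ℕ}
    {c : Fin (d + 1) → ℝ} (hw : homog p w = ∑ k, c k • homog p (v k))
    (f : Fin (d + 1) → ℕ) (s : Fin (d + 1)) :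
    tupleVol d (Function.update f s w) p
      = ∑ k, c k * tupleVol d (Function.update f s (v k)) p := by
  simp only [tupleVol_eq_detRowAlternating, Function.comp_update, hw,
    AlternatingMap.map_update_sum, AlternatingMap.map_update_smul, smul_eq_mul]

lemma tupleVol_update_eq_mul {p : ℕ → Fin d → ℝ} {w : ℕ} {v : Fin (d + 1) → ℕ}
    {c : Fin (d + 1) → ℝ} (hw : homog p w = ∑ k, c k • homog p (v k)) (k : Fin (d + 1)) :
    tupleVol d (Function.update v k w) p = c k * tupleVol d v p := by
  rw [tupleVol_update_eq_sum hw, sum_eq_single k, Function.update_eq_self]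
  · intro j _ hjk
    have hdup : Function.update v k (v j) k = Function.update v k (v j) j := by
      rw [Function.update_self, Function.update_of_ne hjk]
    rw [tupleVol_of_not_injective (fun hinj => hjk (hinj hdup).symm), mul_zero]
  · exact fun h => absurd (mem_univ k) h

lemma exists_homog_eq_sum {p : ℕ → Fin d → ℝ} {v : Fin (d + 1) → ℕ}
    (hv : tupleVol d v p ≠ 0) (w : ℕ) :
    ∃ c : Fin (d + 1) → ℝ, homog p w = ∑ k, c k • homog p (v k) := by
  have hunit : IsUnit (Matrix.of fun j => homog p (v j)) :=
    (Matrix.isUnit_iff_isUnit_det _).mpr (isUnit_iff_ne_zero.mpr hv)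
  obtain ⟨c, hc⟩ := Matrix.vecMul_surjective_iff_isUnit.mpr hunit (homog p w)
  exact ⟨c, by rw [← hc]; exact Matrix.vecMul_eq_sum c _⟩

end TupleVolume

lemma IsGeneric.mono {d : ℕ} {V V' : Finset ℕ} {p : ℕ → Fin d → ℝ} (hV : V' ⊆ V)
    (hp : IsGeneric d V p) : IsGeneric d V' p := by
  intro f hf
  let incl : ↥V' × Fin d → ↥V × Fin d := fun x => (⟨x.1, hV x.1.2⟩, x.2)
  have hincl : Function.Injective incl := by
    rintro ⟨⟨a, ha⟩, r⟩ ⟨⟨b, hb⟩, s⟩ h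
    simp only [incl, Prod.mk.injEq, Subtype.mk.injEq] at h
    simp [h.1, h.2]
  have := hp (MvPolynomial.rename incl f)
    ((map_ne_zero_iff _ (MvPolynomial.rename_injective incl hincl)).mpr hf)
  rwa [MvPolynomial.aeval_rename] at this

lemma tupleVol_ne_zero_of_isGeneric {d : ℕ} {V : Finset ℕ} {f : Fin (d + 1) → ℕ}
    (hf : Function.Injective f) (hfV : ∀ j, f j ∈ V) {p : ℕ → Fin d → ℝ}
    (hp : IsGeneric d V p) : tupleVol d f p ≠ 0 := by
  let N : Matrix (Fin (d + 1)) (Fin (d + 1)) (MvPolynomial (↥V × Fin d) ℚ) :=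
    Matrix.of fun j => Fin.cons 1 fun k => MvPolynomial.X (⟨f j, hfV j⟩, k)
  have hN : MvPolynomial.aeval (fun v : ↥V × Fin d => p v.1 v.2) N.det = tupleVol d f p := by
    rw [AlgHom.map_det, tupleVol]
    congr 1
    ext j c
    refine Fin.cases ?_ (fun k => ?_) c <;> simp [N, homog]
  -- evaluated where vertex `f (k+1)` sits at the `k`-th unit vector, `N` is unitriangular
  have hN0 : N.det ≠ 0 := by
    let g : ↥V × Fin d → ℚ := fun x => if (x.1 : ℕ) = f x.2.succ then 1 else 0
    have hmap : (MvPolynomial.eval g).mapMatrix N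
        = Matrix.of fun j c => Fin.cons 1 (fun k => if f j = f k.succ then 1 else 0) c := by
      ext j c
      refine Fin.cases ?_ (fun k => ?_) c <;> simp [N, g]
    have htri : ((MvPolynomial.eval g).mapMatrix N).IsLowerTriangular := by
      intro j c hjc
      obtain ⟨k, rfl⟩ := Fin.exists_succ_eq.mpr (ne_of_gt (lt_of_le_of_lt (Fin.zero_le j) hjc))
      simp [hmap, hf.eq_iff, (ne_of_lt hjc : j ≠ k.succ)]
    have hdiag : ∏ j, (MvPolynomial.eval g).mapMatrix N j j = 1 :=
      prod_eq_one fun j _ => by refine Fin.cases ?_ (fun k => ?_) j <;> simp [hmap]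
    intro h0
    have h1 := (MvPolynomial.eval g).map_det N
    rw [h0, map_zero, Matrix.det_of_isLowerTriangular _ htri, hdiag] at h1
    exact zero_ne_one h1
  exact hN ▸ hp _ hN0

lemma vol_ne_zero_of_isGeneric {d : ℕ} {V σ : Finset ℕ} (hσV : σ ⊆ V) (hσ : σ.card = d + 1)
    {p : ℕ → Fin d → ℝ} (hp : IsGeneric d V p) : vol d σ p ≠ 0 := by
  rw [vol_eq_tupleVol hσ]
  exact tupleVol_ne_zero_of_isGeneric (σ.orderEmbOfFin hσ).injective
    (fun j => hσV (orderEmbOfFin_mem σ hσ j)) hp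

lemma image_univ_comp_succAbove {n : ℕ} {g : Fin (n + 1) → ℕ} (hg : Function.Injective g)
    (j : Fin (n + 1)) : univ.image (g ∘ j.succAbove) = (univ.image g).erase (g j) := by
  rw [← image_image, Fin.image_succAbove_univ, compl_eq_univ_sdiff, sdiff_singleton_eq_erase,
    image_erase hg]

lemma image_univ_update {n : ℕ} {f : Fin n → ℕ} (hf : Function.Injective f) (s : Fin n)
    (w : ℕ) : univ.image (Function.update f s w) = insert w ((univ.image f).erase (f s)) := by
  ext x
  simp only [mem_image, mem_univ, true_and, mem_insert, mem_erase]
  constructor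
  · rintro ⟨j, rfl⟩
    by_cases hj : j = s
    · exact Or.inl (by rw [hj, Function.update_self])
    · exact Or.inr ⟨by rwa [Function.update_of_ne hj, ne_eq, hf.eq_iff], j,
        (Function.update_of_ne hj _ _).symm⟩
  · rintro (rfl | ⟨hx, j, rfl⟩)
    · exact ⟨s, Function.update_self _ _ _⟩
    · exact ⟨j, Function.update_of_ne (fun h => hx (by rw [h])) _ _⟩

section Cone

variable {d : ℕ} {p q : ℕ → Fin d → ℝ} {i : ℕ}

lemma vol_eq_of_vol_insert_eq {σ : Finset ℕ} (hσ : σ.card = d + 1) (hi : i ∉ σ)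
    (hcone : ∀ T ∈ σ.powersetCard d, vol d (insert i T) p = vol d (insert i T) q) :
    vol d σ p = vol d σ q := by
  let e := σ.orderEmbOfFin hσ
  let g : Fin (d + 2) → ℕ := Fin.cons i e
  have hg : Function.Injective g :=
    Fin.cons_injective_iff.mpr ⟨by rwa [range_orderEmbOfFin], e.injective⟩
  have himg : univ.image g = insert i σ := by
    rw [← coe_inj, coe_image, coe_univ, Set.image_univ, Fin.range_cons, coe_insert,
      range_orderEmbOfFin]
  have hfacet : ∀ k : Fin (d + 1),
      tupleVol d (g ∘ k.succ.succAbove) p = tupleVol d (g ∘ k.succ.succAbove) q := by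
    intro k
    refine tupleVol_eq_of_vol_image_eq fun _ => ?_
    have hek : e k ∈ σ := orderEmbOfFin_mem σ hσ k
    have hgk : g k.succ = e k := Fin.cons_succ _ _ _
    rw [image_univ_comp_succAbove hg, himg, hgk, erase_insert_of_ne (ne_of_mem_of_not_mem hek hi).symm]
    refine hcone _ (mem_powersetCard.mpr ⟨erase_subset _ _, ?_⟩)
    rw [card_erase_of_mem hek, hσ, Nat.add_sub_cancel]
  have hcocycle := (sum_neg_one_pow_mul_tupleVol_succAbove g p).trans
    (sum_neg_one_pow_mul_tupleVol_succAbove g q).symm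
  simp only [Fin.sum_univ_succ, Fin.val_zero, pow_zero, one_mul, Fin.succAbove_zero, hfacet,
    add_left_inj] at hcocycle
  rw [vol_eq_tupleVol hσ, vol_eq_tupleVol hσ]
  exact hcocycle

lemma vol_eq_of_subset_insert {U σ₀ : Finset ℕ} (hσ₀U : σ₀ ⊆ U) (hσ₀ : σ₀.card = d + 1)
    (hσ₀p : vol d σ₀ p ≠ 0) (hU : ∀ τ ⊆ U, τ.card = d + 1 → vol d τ p = vol d τ q)
    (hcone : ∀ T ∈ σ₀.powersetCard d, vol d (insert i T) p = vol d (insert i T) q)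
    {τ : Finset ℕ} (hτ : τ ⊆ insert i U) (hτcard : τ.card = d + 1) :
    vol d τ p = vol d τ q := by
  by_cases hiτ : i ∉ τ
  · exact hU τ ((subset_insert_iff_of_notMem hiτ).mp hτ) hτcard
  rw [not_not] at hiτ
  let e := σ₀.orderEmbOfFin hσ₀
  have he : tupleVol d e p = tupleVol d e q := by
    rw [← vol_eq_tupleVol, ← vol_eq_tupleVol, hU σ₀ hσ₀U hσ₀]
  have hep : tupleVol d e p ≠ 0 := by rwa [← vol_eq_tupleVol]
  obtain ⟨cp, hcp⟩ := exists_homog_eq_sum hep i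
  obtain ⟨cq, hcq⟩ := exists_homog_eq_sum (he ▸ hep) i
  have hc : cp = cq := by
    funext k
    have hcone_k : tupleVol d (Function.update e k i) p = tupleVol d (Function.update e k i) q := by
      refine tupleVol_eq_of_vol_image_eq fun _ => ?_
      rw [image_univ_update e.injective, image_orderEmbOfFin_univ]
      refine hcone _ (mem_powersetCard.mpr ⟨erase_subset _ _, ?_⟩)
      rw [card_erase_of_mem (orderEmbOfFin_mem σ₀ hσ₀ k), hσ₀, Nat.add_sub_cancel]
    rw [tupleVol_update_eq_mul hcp, tupleVol_update_eq_mul hcq, ← he] at hcone_k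
    exact mul_right_cancel₀ hep hcone_k
  let f := τ.orderEmbOfFin hτcard
  obtain ⟨s, hs⟩ : i ∈ Set.range f := by rwa [range_orderEmbOfFin]
  have hf : Function.update f s i = f := by rw [← hs, Function.update_eq_self]
  rw [vol_eq_tupleVol hτcard, vol_eq_tupleVol hτcard, ← hf, tupleVol_update_eq_sum hcp,
    tupleVol_update_eq_sum hcq, hc]
  refine sum_congr rfl fun k _ => congrArg _ (tupleVol_eq_of_vol_image_eq fun hinj => ?_)
  refine hU _ ?_ (by rw [card_image_of_injective _ hinj, card_univ, Fintype.card_fin])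
  rw [image_univ_update f.injective, image_orderEmbOfFin_univ, hs]
  refine insert_subset (hσ₀U (orderEmbOfFin_mem σ₀ hσ₀ k)) fun x hx => ?_
  obtain ⟨hxi, hxτ⟩ := mem_erase.mp hx
  exact (mem_insert.mp (hτ hxτ)).resolve_left hxi

end Cone

lemma insert_mem_of_mem_link {i : ℕ} {F : Finset (Finset ℕ)} {T : Finset ℕ}
    (h : T ∈ link i F) : insert i T ∈ F := by
  obtain ⟨σ, hσ, rfl⟩ := mem_image.mp h
  rw [insert_erase (mem_filter.mp hσ).2]
  exact (mem_filter.mp hσ).1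

lemma biUnion_link_subset_erase {i : ℕ} {F : Finset (Finset ℕ)} {V : Finset ℕ}
    (hF : ∀ σ ∈ F, σ ⊆ V) : (link i F).biUnion id ⊆ V.erase i := by
  simp only [biUnion_subset, link, mem_image, mem_filter, id]
  rintro _ ⟨σ, ⟨hσ, -⟩, rfl⟩
  exact erase_subset_erase i (hF σ hσ)

lemma subset_Icc_and_card_of_mem_LGRC {d m : ℕ} (hd : 1 ≤ d) (hm : d + 1 ≤ m) {σ : Finset ℕ}
    (h : σ ∈ LGRC d m) : σ ⊆ Icc 1 m ∧ σ.card = d + 1 := by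
  rcases mem_insert.mp h with rfl | h
  · exact ⟨Icc_subset_Icc le_rfl hm, by rw [Nat.card_Icc, Nat.add_sub_cancel]⟩
  obtain ⟨⟨a, S⟩, hmem, rfl⟩ := mem_image.mp h
  obtain ⟨ha, hS, hScard⟩ := by simpa only [mem_product, mem_powersetCard] using hmem
  have hSmem : ∀ x ∈ S, 2 ≤ x ∧ x ≤ d + 1 := fun x hx => mem_Icc.mp (hS hx)
  have ha' := mem_Icc.mp ha
  have haS : a ∉ S := fun h => by linarith [(hSmem a h).2]
  have h1S : 1 ∉ insert a S := by
    rw [mem_insert]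
    rintro (h | h)
    · omega
    · linarith [(hSmem 1 h).1]
  refine ⟨fun x hx => ?_, ?_⟩
  · rcases mem_insert.mp hx with rfl | hx
    · exact mem_Icc.mpr ⟨le_rfl, by omega⟩
    rcases mem_insert.mp hx with rfl | hx
    · exact mem_Icc.mpr ⟨by omega, ha'.2⟩
    · exact mem_Icc.mpr ⟨by linarith [(hSmem x hx).1], by linarith [(hSmem x hx).2]⟩
  · rw [card_insert_of_notMem h1S, card_insert_of_notMem haS, hScard]
    omega

section Relabel

variable (W : Finset ℕ)

def relabel (t : ℕ) : ℕ := (W.sort (· ≤ ·)).getD (t - 1) 0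

lemma relabel_mem {t : ℕ} (ht : t ∈ Icc 1 W.card) : relabel W t ∈ W := by
  obtain ⟨h1, h2⟩ := mem_Icc.mp ht
  have hlt : t - 1 < (W.sort (· ≤ ·)).length := by rw [length_sort]; omega
  rw [relabel, List.getD_eq_getElem _ _ hlt, ← mem_sort (· ≤ ·)]
  exact List.getElem_mem hlt

lemma relabel_injOn : Set.InjOn (relabel W) (Icc 1 W.card) := by
  intro a ha b hb hab
  simp only [coe_Icc, Set.mem_Icc] at ha hb
  have hla : a - 1 < (W.sort (· ≤ ·)).length := by rw [length_sort]; omega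
  have hlb : b - 1 < (W.sort (· ≤ ·)).length := by rw [length_sort]; omega
  simp only [relabel, List.getD_eq_getElem _ _ hla, List.getD_eq_getElem _ _ hlb] at hab
  have := (W.sort_nodup (· ≤ ·)).getElem_inj_iff.mp hab
  omega

lemma subset_and_card_of_mem_LGRCOn {d : ℕ} (hd : 1 ≤ d) (hm : d + 1 ≤ W.card)
    {σ : Finset ℕ} (h : σ ∈ LGRCOn d W) : σ ⊆ W ∧ σ.card = d + 1 := by
  obtain ⟨ρ, hρ, rfl⟩ := mem_image.mp h
  obtain ⟨hρW, hρcard⟩ := subset_Icc_and_card_of_mem_LGRC hd hm hρ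
  refine ⟨fun x hx => ?_, ?_⟩
  · obtain ⟨t, ht, rfl⟩ := mem_image.mp hx
    exact relabel_mem W (hρW ht)
  · rw [← hρcard]
    exact card_image_of_injOn ((relabel_injOn W).mono (by exact_mod_cast hρW))

end Relabel

lemma LGRCOn_nonempty (d : ℕ) (W : Finset ℕ) : (LGRCOn d W).Nonempty :=
  (insert_nonempty _ _).image _

theorem vertex_removal_LGRC_general (d n : ℕ) (hd : 1 ≤ d)
    (F : Finset (Finset ℕ)) (hF : ∀ σ ∈ F, σ ⊆ Finset.Icc 1 n ∧ σ.card = d + 1)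
    (i : ℕ)
    (W : Finset ℕ) (hW : W = (link i F).biUnion id)
    (hm : d + 1 ≤ W.card)
    (hfaces : ∀ σ ∈ LGRCOn d W, ∀ T ∈ σ.powersetCard d, T ∈ link i F)
    (hrigid : GenGlobRigid d ((Finset.Icc 1 n).erase i)
      ((F.filter fun σ => i ∉ σ) ∪ LGRCOn d W)) :
    GenGlobRigid d (Finset.Icc 1 n) F := by
  intro p q hp hq hpqF τ hτ hτcard
  have hWV : W ⊆ (Icc 1 n).erase i := hW ▸ biUnion_link_subset_erase fun σ hσ => (hF σ hσ).1
  have hcone : ∀ σ ∈ LGRCOn d W, ∀ T ∈ σ.powersetCard d,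
      vol d (insert i T) p = vol d (insert i T) q :=
    fun σ hσ T hT => hpqF _ (insert_mem_of_mem_link (hfaces σ hσ T hT))
  have hpqΛ : ∀ σ ∈ LGRCOn d W, vol d σ p = vol d σ q := by
    intro σ hσ
    obtain ⟨hσW, hσcard⟩ := subset_and_card_of_mem_LGRCOn W hd hm hσ
    exact vol_eq_of_vol_insert_eq hσcard (fun h => (mem_erase.mp (hWV (hσW h))).1 rfl)
      (hcone σ hσ)
  have hpqU := hrigid p q (hp.mono (erase_subset i _)) (hq.mono (erase_subset i _))
    fun σ hσ => (mem_union.mp hσ).elim (fun h => hpqF σ (mem_filter.mp h).1) (hpqΛ σ)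
  obtain ⟨σ₀, hσ₀⟩ := LGRCOn_nonempty d W
  obtain ⟨hσ₀W, hσ₀card⟩ := subset_and_card_of_mem_LGRCOn W hd hm hσ₀
  have hσ₀p := vol_ne_zero_of_isGeneric (hσ₀W.trans (hWV.trans (erase_subset i _))) hσ₀card hp
  exact vol_eq_of_subset_insert (hσ₀W.trans hWV) hσ₀card hσ₀p hpqU (hcone σ₀ hσ₀)
    (hτ.trans (insert_erase_subset i _)) hτcard

/-- Vertex Removal Lemma with the LGRC in place of the complete complex: if
`|link_F(i)| ≥ d+1`, `W` is the vertex set of `link_F(i)` with `|W| ≥ d+1`, every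
`d`-subset of every member of the copy `Λ_d(W)` of the LGRC on `W` lies in `link_F(i)`,
and `{σ ∈ F : i ∉ σ} ∪ Λ_d(W)` is generically globally `d`-volume rigid on `V \ {i}`,
then `F` is generically globally `d`-volume rigid on `V = {1, …, n}`. -/
theorem vertex_removal_LGRC (d n : ℕ) (hd : 1 ≤ d)
    (F : Finset (Finset ℕ)) (hF : ∀ σ ∈ F, σ ⊆ Finset.Icc 1 n ∧ σ.card = d + 1)
    (i : ℕ) (hi : i ∈ Finset.Icc 1 n)
    (hlink : d + 1 ≤ (link i F).card)
    (W : Finset ℕ) (hW : W = (link i F).biUnion id)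
    (hm : d + 1 ≤ W.card)
    (hfaces : ∀ σ ∈ LGRCOn d W, ∀ T ∈ σ.powersetCard d, T ∈ link i F)
    (hrigid : GenGlobRigid d ((Finset.Icc 1 n).erase i)
      ((F.filter fun σ => i ∉ σ) ∪ LGRCOn d W)) :
    GenGlobRigid d (Finset.Icc 1 n) F :=
  vertex_removal_LGRC_general d n hd F hF i W hW hm hfaces hrigid
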